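/- Let p and Q be random variables with Q > 0 almost surely, let F be a random variable with F ≤ (p · ε) / Q² almost surely for some ε > 0, and let u be a real number. Define K_u = p · ε - Q² · u and μ = E[K_u], and suppose μ < 0. Then for any even positive integer n with E[(K_u - μ)^n] finite, P[F ≥ u] ≤ E[(K_u - μ)^n] / μ^n. -/

import Mathlib

/-!
On the event `u ≤ F` the bound `F ≤ p ε / Q²` with `Q > 0` forces `K_u = p ε - Q² u ≥ 0`, so
`K_u - μ ≥ -μ > 0` and hence `(K_u - μ)^n ≥ μ^n` for even `n`. Markov's inequality applied to the
nonnegative variable `(K_u - μ)^n` at level `μ^n` gives the bound.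
-/

open MeasureTheory

section

variable {Ω : Type*} [MeasurableSpace Ω] {μ : Measure Ω}

lemma measureReal_le_integral_div_of_ae_le {S : Set Ω} {g : Ω → ℝ} {c : ℝ} (hc : 0 < c)
    (hg : Integrable g μ) (hg_nonneg : 0 ≤ᵐ[μ] g) (hS : ∀ᵐ ω ∂μ, ω ∈ S → c ≤ g ω) :
    μ.real S ≤ (∫ ω, g ω ∂μ) / c := by
  have hS_le : μ S ≤ μ {ω | c ≤ g ω} := measure_mono_ae hS
  have h_markov : c * μ.real {ω | c ≤ g ω} ≤ ∫ ω, g ω ∂μ :=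
    mul_meas_ge_le_integral_of_nonneg hg_nonneg hg c
  rw [le_div_iff₀' hc]
  refine le_trans (mul_le_mul_of_nonneg_left ?_ hc.le) h_markov
  exact ENNReal.toReal_mono (hg.measure_ge_lt_top hc).ne hS_le

lemma pow_le_sub_pow_of_nonneg {x m : ℝ} {n : ℕ} (hn : Even n) (hm : m ≤ 0) (hx : 0 ≤ x) :
    m ^ n ≤ (x - m) ^ n := by
  rw [← hn.neg_pow]
  exact pow_le_pow_left₀ (neg_nonneg.mpr hm) (by linarith) n

lemma measureReal_le_central_moment_div_of_ae_nonneg {S : Set Ω} {X : Ω → ℝ} {m : ℝ}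
    (hm : m < 0) {n : ℕ} (hn : Even n) (hmoment : Integrable (fun ω => (X ω - m) ^ n) μ)
    (hX : ∀ᵐ ω ∂μ, ω ∈ S → 0 ≤ X ω) :
    μ.real S ≤ (∫ ω, (X ω - m) ^ n ∂μ) / m ^ n :=
  measureReal_le_integral_div_of_ae_le (hn.pow_pos hm.ne) hmoment
    (Filter.Eventually.of_forall fun _ => hn.pow_nonneg _)
    (hX.mono fun _ h hS => pow_le_sub_pow_of_nonneg hn hm.le (h hS))

end

lemma sub_sq_mul_nonneg_of_le_div_sq {a q u : ℝ} (hq : 0 < q) (h : u ≤ a / q ^ 2) :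
    0 ≤ a - q ^ 2 * u := by
  rw [le_div_iff₀ (by positivity)] at h
  linarith

theorem cmb_fractional_flag_bound_general {Ω : Type*} [MeasurableSpace Ω] (μ : Measure Ω)
    (F p Q : Ω → ℝ) (ε : ℝ)
    (hQpos : ∀ᵐ ω ∂μ, 0 < Q ω)
    (hFp : ∀ᵐ ω ∂μ, F ω ≤ p ω * ε / (Q ω) ^ 2) (u : ℝ)
    (hμneg : (∫ ω, p ω * ε - (Q ω) ^ 2 * u ∂μ) < 0)
    (n : ℕ) (hneven : Even n)
    (hcm : Integrable
      (fun ω => ((p ω * ε - (Q ω) ^ 2 * u)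
        - ∫ ω', p ω' * ε - (Q ω') ^ 2 * u ∂μ) ^ n) μ) :
    (μ {ω | u ≤ F ω}).toReal
      ≤ (∫ ω, ((p ω * ε - (Q ω) ^ 2 * u)
            - ∫ ω', p ω' * ε - (Q ω') ^ 2 * u ∂μ) ^ n ∂μ)
          / (∫ ω, p ω * ε - (Q ω) ^ 2 * u ∂μ) ^ n := by
  have hK_nonneg : ∀ᵐ ω ∂μ, u ≤ F ω → 0 ≤ p ω * ε - (Q ω) ^ 2 * u := by
    filter_upwards [hQpos, hFp] with ω hQ hF hu
    exact sub_sq_mul_nonneg_of_le_div_sq hQ (hu.trans hF)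
  exact measureReal_le_central_moment_div_of_ae_nonneg hμneg hneven hcm hK_nonneg

theorem cmb_fractional_flag_bound {Ω : Type*} [MeasurableSpace Ω] (μ : Measure Ω)
    [IsProbabilityMeasure μ] (F p Q : Ω → ℝ) (ε : ℝ) (hε : 0 < ε)
    (hFmeas : Measurable F) (hpmeas : Measurable p) (hQmeas : Measurable Q)
    (hQpos : ∀ᵐ ω ∂μ, 0 < Q ω)
    (hFp : ∀ᵐ ω ∂μ, F ω ≤ p ω * ε / (Q ω) ^ 2) (u : ℝ)
    (hKint : Integrable (fun ω => p ω * ε - (Q ω) ^ 2 * u) μ)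
    (hμneg : (∫ ω, p ω * ε - (Q ω) ^ 2 * u ∂μ) < 0)
    (n : ℕ) (hn : 0 < n) (hneven : Even n)
    (hcm : Integrable
      (fun ω => ((p ω * ε - (Q ω) ^ 2 * u)
        - ∫ ω', p ω' * ε - (Q ω') ^ 2 * u ∂μ) ^ n) μ) :
    (μ {ω | u ≤ F ω}).toReal
      ≤ (∫ ω, ((p ω * ε - (Q ω) ^ 2 * u)
            - ∫ ω', p ω' * ε - (Q ω') ^ 2 * u ∂μ) ^ n ∂μ)
          / (∫ ω, p ω * ε - (Q ω) ^ 2 * u ∂μ) ^ n :=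
  cmb_fractional_flag_bound_general μ F p Q ε hQpos hFp u hμneg n hneven hcm
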